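/- Let Γ : I → ℂ³ be a normalized lift with the identities ⟨Γ,Γ⟩ = ⟨Γ,Γ'⟩ = ⟨Γ',Γ''⟩ = ⟨Γ,Γ'''⟩ = 0, ⟨Γ',Γ'⟩ = −⟨Γ,Γ''⟩ = 1, and define a = Im⟨Γ''',Γ''⟩. If h : J → I is a smooth change of parameter and Γ̃ = (1/h')·(Γ∘h), then the cubic density transforms by ã = (h')³ · (a∘h). -/

import Mathlib

open Complex

/-- The pseudo-Hermitian inner product ⟨z,w⟩ = i(conj z¹ w³ − conj z³ w¹) + conj z² w². -/
noncomputable def herm (z w : Fin 3 → ℂ) : ℂ :=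
  Complex.I * ((starRingEnd ℂ) (z 0) * w 2 - (starRingEnd ℂ) (z 2) * w 0) +
    (starRingEnd ℂ) (z 1) * w 1

/-- The cubic Fubini density a = Im⟨Γ''', Γ''⟩ of a lift Γ. -/
noncomputable def cubicDensity (Γ : ℝ → (Fin 3 → ℂ)) (t : ℝ) : ℝ :=
  (herm (iteratedDeriv 3 Γ t) (iteratedDeriv 2 Γ t)).im

/-!
Write `Γ̃ = c • (Γ ∘ h)` with `c = 1 / h'`. By the chain and Leibniz rules, `Γ̃⁽ᵏ⁾` is a
combination, with smooth real coefficients, of `Γ ∘ h, …, Γ⁽ᵏ⁾ ∘ h` whose leading coefficient is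
`c h'ᵏ`. Since `⟨w, z⟩ = conj ⟨z, w⟩`, the normalization identities and the derivative
`⟨Γ'', Γ''⟩ + ⟨Γ', Γ'''⟩ = 0` of `⟨Γ', Γ''⟩ = 0` make `Im ⟨Γ⁽ⁱ⁾, Γ⁽ʲ⁾⟩` vanish for all `i ≤ 3`,
`j ≤ 2` except `(i, j) = (3, 2)`. Hence only the leading coefficients survive in
`Im ⟨Γ̃''', Γ̃''⟩`, and `ã = (c h'³)(c h'²) (a ∘ h) = h'³ (a ∘ h)`.
-/

open scoped ContDiff

section ReparamDerivatives

variable {E : Type*} [NormedAddCommGroup E] [NormedSpace ℝ E] {Γ : ℝ → E} {h : ℝ → ℝ}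

theorem ContDiff.hasDerivAt_iteratedDeriv (hΓ : ContDiff ℝ ∞ Γ) (n : ℕ) (t : ℝ) :
    HasDerivAt (iteratedDeriv n Γ) (iteratedDeriv (n + 1) Γ t) t := by
  rw [iteratedDeriv_succ]
  exact ((hΓ.differentiable_iteratedDeriv n (by exact_mod_cast WithTop.coe_lt_top _)) t).hasDerivAt

/-- If `F = ∑ⱼ p j • Γ⁽ʲ⁾ ∘ h`, then `F' = ∑ⱼ derivCoeff h p j • Γ⁽ʲ⁾ ∘ h`. -/
noncomputable def derivCoeff (h : ℝ → ℝ) (p : ℕ → ℝ → ℝ) : ℕ → ℝ → ℝ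
  | 0 => deriv (p 0)
  | j + 1 => fun u => deriv (p (j + 1)) u + p j u * deriv h u

theorem ContDiff.derivCoeff (hh : ContDiff ℝ ∞ h) {p : ℕ → ℝ → ℝ} (hp : ∀ j, ContDiff ℝ ∞ (p j))
    (j : ℕ) : ContDiff ℝ ∞ (derivCoeff h p j) := by
  cases j with
  | zero => exact (contDiff_infty_iff_deriv.mp (hp 0)).2
  | succ j =>
    exact (contDiff_infty_iff_deriv.mp (hp (j + 1))).2.add
      ((hp j).mul (contDiff_infty_iff_deriv.mp hh).2)

theorem hasDerivAt_sum_smul_iteratedDeriv_comp (hΓ : ContDiff ℝ ∞ Γ) (hh : Differentiable ℝ h)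
    {p : ℕ → ℝ → ℝ} (hp : ∀ j, Differentiable ℝ (p j)) {n : ℕ} (hpn : p (n + 1) = 0) (u : ℝ) :
    HasDerivAt (fun v => ∑ j ∈ Finset.range (n + 1), p j v • iteratedDeriv j Γ (h v))
      (∑ j ∈ Finset.range (n + 2), derivCoeff h p j u • iteratedDeriv j Γ (h u)) u := by
  have hterm : ∀ j ∈ Finset.range (n + 1),
      HasDerivAt (fun v => p j v • iteratedDeriv j Γ (h v))
        (p j u • deriv h u • iteratedDeriv (j + 1) Γ (h u)
          + deriv (p j) u • iteratedDeriv j Γ (h u)) u := fun j _ =>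
    (hp j u).hasDerivAt.smul ((hΓ.hasDerivAt_iteratedDeriv j (h u)).scomp u (hh u).hasDerivAt)
  convert HasDerivAt.fun_sum hterm using 1
  have hlow : ∑ j ∈ Finset.range (n + 1), deriv (p (j + 1)) u • iteratedDeriv (j + 1) Γ (h u)
      + deriv (p 0) u • iteratedDeriv 0 Γ (h u)
      = ∑ j ∈ Finset.range (n + 1), deriv (p j) u • iteratedDeriv j Γ (h u) := by
    rw [← Finset.sum_range_succ' (fun j => deriv (p j) u • iteratedDeriv j Γ (h u)),
      Finset.sum_range_succ, hpn, deriv_zero, Pi.zero_apply, zero_smul, add_zero]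
  rw [Finset.sum_range_succ']
  simp only [derivCoeff, add_smul, mul_smul, Finset.sum_add_distrib]
  rw [← hlow]
  abel

theorem exists_iteratedDeriv_smul_comp_eq_sum (hΓ : ContDiff ℝ ∞ Γ) (hh : ContDiff ℝ ∞ h)
    {c : ℝ → ℝ} (hc : ContDiff ℝ ∞ c) (k : ℕ) :
    ∃ p : ℕ → ℝ → ℝ, (∀ j, ContDiff ℝ ∞ (p j)) ∧ (∀ j, k < j → p j = 0) ∧
      p k = (fun u => c u * deriv h u ^ k) ∧
      iteratedDeriv k (fun u => c u • Γ (h u))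
        = fun u => ∑ j ∈ Finset.range (k + 1), p j u • iteratedDeriv j Γ (h u) := by
  induction k with
  | zero =>
    refine ⟨fun j => if j = 0 then c else 0, fun j => ?_, fun j hj => if_neg hj.ne', ?_, ?_⟩
    · dsimp only
      split_ifs
      exacts [hc, contDiff_const]
    · simp
    · simp
  | succ k ih =>
    obtain ⟨p, hp, hp_zero, hp_lead, hF⟩ := ih
    have hpk : p (k + 1) = 0 := hp_zero _ k.lt_succ_self
    refine ⟨derivCoeff h p, hh.derivCoeff hp, fun j hj => ?_, ?_, ?_⟩
    · obtain _ | i := j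
      · omega
      funext u
      simp [derivCoeff, hp_zero i (by omega), hp_zero (i + 1) (by omega)]
    · funext u
      simp [derivCoeff, hpk, hp_lead, pow_succ, mul_assoc]
    · rw [iteratedDeriv_succ, hF]
      exact funext fun u => (hasDerivAt_sum_smul_iteratedDeriv_comp hΓ (hh.differentiable (by simp))
        (fun j => (hp j).differentiable (by simp)) hpk u).deriv

end ReparamDerivatives

noncomputable def hermₗ : (Fin 3 → ℂ) →ₗ[ℝ] (Fin 3 → ℂ) →ₗ[ℝ] ℂ :=
  LinearMap.mk₂ ℝ herm (fun _ _ _ => by simp only [herm, Pi.add_apply, map_add]; ring)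
    (fun _ _ _ => by
      simp only [herm, Pi.smul_apply, Complex.real_smul, map_mul, Complex.conj_ofReal]; ring)
    (fun _ _ _ => by simp only [herm, Pi.add_apply]; ring)
    (fun _ _ _ => by simp only [herm, Pi.smul_apply, Complex.real_smul]; ring)

theorem hermₗ_apply (z w : Fin 3 → ℂ) : hermₗ z w = herm z w := rfl

theorem herm_swap (z w : Fin 3 → ℂ) : herm w z = starRingEnd ℂ (herm z w) := by
  simp only [herm, map_add, map_mul, map_sub, Complex.conj_I, Complex.conj_conj]
  ring

theorem im_herm_swap (z w : Fin 3 → ℂ) : (herm w z).im = -(herm z w).im := by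
  rw [herm_swap, Complex.conj_im]

theorem im_herm_self (z : Fin 3 → ℂ) : (herm z z).im = 0 := by
  linarith [im_herm_swap z z]

theorem im_herm_sum_smul_sum_smul (v : ℕ → Fin 3 → ℂ) (x y : ℕ → ℝ) (m n : ℕ)
    (hv : ∀ i ≤ m, ∀ j ≤ n, (i, j) ≠ (m, n) → (herm (v i) (v j)).im = 0) :
    (herm (∑ i ∈ Finset.range (m + 1), x i • v i) (∑ j ∈ Finset.range (n + 1), y j • v j)).im
      = x m * y n * (herm (v m) (v n)).im := by
  change (hermₗ _ _).im = _
  simp only [map_sum, map_smul, LinearMap.sum_apply, LinearMap.smul_apply, Complex.im_sum,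
    Complex.smul_im, hermₗ_apply, smul_eq_mul]
  rw [Finset.sum_eq_single n, Finset.sum_eq_single m]
  · ring
  · intro i hi him
    rw [hv i (Finset.mem_range_succ_iff.mp hi) n le_rfl (by simp [him]), mul_zero]
  · simp
  · intro j hj hjn
    refine mul_eq_zero_of_right _ (Finset.sum_eq_zero fun i hi => ?_)
    rw [hv i (Finset.mem_range_succ_iff.mp hi) j (Finset.mem_range_succ_iff.mp hj) (by simp [hjn]),
      mul_zero]
  · simp

theorem hasDerivAt_herm {f g : ℝ → Fin 3 → ℂ} {f' g' : Fin 3 → ℂ} {t : ℝ}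
    (hf : HasDerivAt f f' t) (hg : HasDerivAt g g' t) :
    HasDerivAt (fun u => herm (f u) (g u)) (herm f' (g t) + herm (f t) g') t := by
  have hfi : ∀ i, HasDerivAt (fun u => f u i) (f' i) t := hasDerivAt_pi.mp hf
  have hgi : ∀ i, HasDerivAt (fun u => g u i) (g' i) t := hasDerivAt_pi.mp hg
  convert (((((hfi 0).star.mul (hgi 2)).sub ((hfi 2).star.mul (hgi 0))).const_mul Complex.I).add
    ((hfi 1).star.mul (hgi 1))) using 1
  any_goals rfl
  simp only [herm, starRingEnd_apply]
  ring

theorem im_herm_iteratedDeriv_three_one {Γ : ℝ → Fin 3 → ℂ} (hΓ : ContDiff ℝ ∞ Γ)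
    (h12 : ∀ u, (herm (iteratedDeriv 1 Γ u) (iteratedDeriv 2 Γ u)).im = 0) (t : ℝ) :
    (herm (iteratedDeriv 3 Γ t) (iteratedDeriv 1 Γ t)).im = 0 := by
  have hD := Complex.imCLM.hasFDerivAt.comp_hasDerivAt t
    (hasDerivAt_herm (hΓ.hasDerivAt_iteratedDeriv 1 t) (hΓ.hasDerivAt_iteratedDeriv 2 t))
  have h13 := hD.unique ((hasDerivAt_const t (0 : ℝ)).congr_of_eventuallyEq (.of_forall h12))
  simp only [Complex.imCLM_apply, Complex.add_im, im_herm_self, zero_add] at h13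
  rw [im_herm_swap, h13, neg_zero]

theorem im_herm_iteratedDeriv_eq_zero {Γ : ℝ → Fin 3 → ℂ} (hΓ : ContDiff ℝ ∞ Γ) {t : ℝ}
    (h01 : (herm (Γ t) (iteratedDeriv 1 Γ t)).im = 0)
    (h02 : (herm (Γ t) (iteratedDeriv 2 Γ t)).im = 0)
    (h03 : (herm (Γ t) (iteratedDeriv 3 Γ t)).im = 0)
    (h12 : ∀ u, (herm (iteratedDeriv 1 Γ u) (iteratedDeriv 2 Γ u)).im = 0) :
    ∀ i ≤ 3, ∀ j ≤ 2, (i, j) ≠ (3, 2) →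
      (herm (iteratedDeriv i Γ t) (iteratedDeriv j Γ t)).im = 0 := by
  have h31 := im_herm_iteratedDeriv_three_one hΓ h12 t
  intro i hi j hj hij
  interval_cases i <;> interval_cases j
  · exact im_herm_self _
  · rwa [iteratedDeriv_zero]
  · rwa [iteratedDeriv_zero]
  · rw [im_herm_swap, iteratedDeriv_zero, h01, neg_zero]
  · exact im_herm_self _
  · exact h12 t
  · rw [im_herm_swap, iteratedDeriv_zero, h02, neg_zero]
  · rw [im_herm_swap, h12, neg_zero]
  · exact im_herm_self _
  · rw [im_herm_swap, iteratedDeriv_zero, h03, neg_zero]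
  · exact h31
  · exact absurd rfl hij

theorem stmt2_general (Γ : ℝ → (Fin 3 → ℂ)) (hΓ : ContDiff ℝ (⊤ : ℕ∞) Γ)
    (h01 : ∀ t, herm (Γ t) (iteratedDeriv 1 Γ t) = 0)
    (h12 : ∀ t, herm (iteratedDeriv 1 Γ t) (iteratedDeriv 2 Γ t) = 0)
    (h03 : ∀ t, herm (Γ t) (iteratedDeriv 3 Γ t) = 0)
    (h02 : ∀ t, herm (Γ t) (iteratedDeriv 2 Γ t) = -1)
    (h : ℝ → ℝ) (hh : ContDiff ℝ (⊤ : ℕ∞) h) (hh' : ∀ s, deriv h s ≠ 0) :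
    ∀ s, cubicDensity (fun u => (((deriv h u : ℝ) : ℂ))⁻¹ • Γ (h u)) s
      = (deriv h s)^3 * cubicDensity Γ (h s) := by
  intro s
  have hc : ContDiff ℝ ∞ fun u => (deriv h u)⁻¹ := (contDiff_infty_iff_deriv.mp hh).2.inv hh'
  have hF : (fun u => (((deriv h u : ℝ) : ℂ))⁻¹ • Γ (h u)) = fun u => (deriv h u)⁻¹ • Γ (h u) := by
    funext u
    rw [← Complex.ofReal_inv, Complex.coe_smul]
  obtain ⟨y, -, -, hy2, hF2⟩ := exists_iteratedDeriv_smul_comp_eq_sum hΓ hh hc 2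
  obtain ⟨x, -, -, hx3, hF3⟩ := exists_iteratedDeriv_smul_comp_eq_sum hΓ hh hc 3
  have hframe := im_herm_iteratedDeriv_eq_zero hΓ (t := h s) (by rw [h01, zero_im])
    (by rw [h02, neg_im, one_im, neg_zero]) (by rw [h03, zero_im]) (fun t => by rw [h12, zero_im])
  rw [cubicDensity, hF, hF2, hF3,
    im_herm_sum_smul_sum_smul (fun j => iteratedDeriv j Γ (h s)) (x · s) (y · s) 3 2 hframe,
    hx3, hy2, cubicDensity]
  field_simp [hh' s]

theorem stmt2 (Γ : ℝ → (Fin 3 → ℂ)) (hΓ : ContDiff ℝ (⊤ : ℕ∞) Γ)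
    (h00 : ∀ t, herm (Γ t) (Γ t) = 0)
    (h01 : ∀ t, herm (Γ t) (iteratedDeriv 1 Γ t) = 0)
    (h12 : ∀ t, herm (iteratedDeriv 1 Γ t) (iteratedDeriv 2 Γ t) = 0)
    (h03 : ∀ t, herm (Γ t) (iteratedDeriv 3 Γ t) = 0)
    (h11 : ∀ t, herm (iteratedDeriv 1 Γ t) (iteratedDeriv 1 Γ t) = 1)
    (h02 : ∀ t, herm (Γ t) (iteratedDeriv 2 Γ t) = -1)
    (h : ℝ → ℝ) (hh : ContDiff ℝ (⊤ : ℕ∞) h) (hh' : ∀ s, deriv h s ≠ 0) :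
    ∀ s, cubicDensity (fun u => (((deriv h u : ℝ) : ℂ))⁻¹ • Γ (h u)) s
      = (deriv h s)^3 * cubicDensity Γ (h s) :=
  stmt2_general Γ hΓ h01 h12 h03 h02 h hh hh'
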